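/- Let (λ_k)_{k∈ℕ} be a nondecreasing sequence of nonnegative real numbers tending to infinity, with counting function N(λ) = Card{k ∈ ℕ : λ_k ≤ λ}, and assume N(λ) ∼ C λ^{n/2} as λ → ∞ for some constants C > 0 and n > 0. Then, as t → 0⁺, ∑_{k=0}^∞ e^{-λ_k t} ∼ C Γ(n/2 + 1) t^{-n/2}, i.e. the ratio of the two sides tends to 1. -/

import Mathlib

/-!
Since `e^{-λt} = ∫_{λt}^∞ e^{-s} ds`, summing over `k` gives the layer-cake identity
`∑_k e^{-λ_k t} = ∫_0^∞ e^{-s} N(s/t) ds`. Weyl's law gives `t^{n/2} N(s/t) → C s^{n/2}` for each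
`s > 0`, and together with the monotonicity of `N` it bounds `t^{n/2} N(s/t)` by
`N(x₀) + (C + 1) s^{n/2}` uniformly in `t ≤ 1`. Dominated convergence then yields
`t^{n/2} ∑_k e^{-λ_k t} → C ∫_0^∞ e^{-s} s^{n/2} ds = C Γ(n/2 + 1)`.
-/

open Filter Set MeasureTheory Real Topology

/- `Nat.card` is `0` on infinite sets, hence the finiteness hypotheses on sublevel sets below. -/
noncomputable def countingFunction (Λ : ℕ → ℝ) (x : ℝ) : ℝ := Nat.card {k : ℕ | Λ k ≤ x}

lemma finite_setOf_le_of_tendsto_atTop {Λ : ℕ → ℝ} (hΛ : Tendsto Λ atTop atTop) (x : ℝ) :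
    {k | Λ k ≤ x}.Finite := by
  simpa [← Nat.cofinite_eq_atTop] using hΛ.eventually (eventually_gt_atTop x)

section countingFunction

variable {Λ : ℕ → ℝ}

lemma countingFunction_nonneg (Λ : ℕ → ℝ) (x : ℝ) : 0 ≤ countingFunction Λ x := Nat.cast_nonneg _

lemma countingFunction_mono (hfin : ∀ x, {k | Λ k ≤ x}.Finite) : Monotone (countingFunction Λ) :=
  fun _ y hxy => Nat.cast_le.2 (Nat.card_mono (hfin y) fun _ hk => le_trans hk hxy)

lemma countingFunction_mul_const (Λ : ℕ → ℝ) {t : ℝ} (ht : 0 < t) (s : ℝ) :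
    countingFunction (fun k => Λ k * t) s = countingFunction Λ (s / t) := by
  simp_rw [countingFunction, le_div_iff₀ ht]

lemma ofReal_countingFunction {x : ℝ} (hfin : {k | Λ k ≤ x}.Finite) :
    ENNReal.ofReal (countingFunction Λ x) = {k | Λ k ≤ x}.encard := by
  rw [countingFunction, ENNReal.ofReal_natCast, Nat.card_coe_set_eq, ← hfin.cast_ncard_eq]
  rfl

end countingFunction

lemma ofReal_exp_neg_eq_lintegral_indicator {a : ℝ} (ha : 0 ≤ a) :
    ENNReal.ofReal (exp (-a)) =
      ∫⁻ s in Ici 0, (Ici a).indicator (fun s => ENNReal.ofReal (exp (-s))) s := by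
  rw [lintegral_indicator measurableSet_Ici, Measure.restrict_restrict measurableSet_Ici,
    inter_eq_left.2 (Ici_subset_Ici.2 ha), ← setLIntegral_congr Ioi_ae_eq_Ici,
    ← integral_exp_neg_Ioi, ofReal_integral_eq_lintegral_ofReal (integrableOn_exp_neg_Ioi a)
      (ae_of_all _ fun _ => (exp_pos _).le)]

lemma tsum_ofReal_exp_neg_eq_lintegral {μ : ℕ → ℝ} (hμ : ∀ k, 0 ≤ μ k) :
    ∑' k, ENNReal.ofReal (exp (-μ k)) =
      ∫⁻ s in Ioi 0, ENNReal.ofReal (exp (-s)) * {k | μ k ≤ s}.encard := by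
  set f : ℝ → ENNReal := fun s => ENNReal.ofReal (exp (-s))
  have hf : Measurable f := by fun_prop
  have hswap : ∀ s k, (Ici (μ k)).indicator f s = {k | μ k ≤ s}.indicator (fun _ => f s) k :=
    fun s k => by by_cases hk : μ k ≤ s <;> simp [hk]
  rw [Measure.restrict_congr_set Ioi_ae_eq_Ici]
  calc ∑' k, f (μ k)
      = ∑' k, ∫⁻ s in Ici 0, (Ici (μ k)).indicator f s :=
        tsum_congr fun k => ofReal_exp_neg_eq_lintegral_indicator (hμ k)
    _ = ∫⁻ s in Ici 0, ∑' k, (Ici (μ k)).indicator f s :=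
        (lintegral_tsum fun k => (hf.indicator measurableSet_Ici).aemeasurable).symm
    _ = ∫⁻ s in Ici 0, f s * {k | μ k ≤ s}.encard := lintegral_congr fun s => by
        rw [tsum_congr (hswap s), ← tsum_subtype, ENNReal.tsum_set_const, mul_comm]

lemma tsum_exp_neg_eq_integral_exp_neg_mul_countingFunction {μ : ℕ → ℝ} (hμ : ∀ k, 0 ≤ μ k)
    (hfin : ∀ x, {k | μ k ≤ x}.Finite) :
    ∑' k, exp (-μ k) = ∫ s in Ioi 0, exp (-s) * countingFunction μ s := by
  have hnonneg : ∀ s, 0 ≤ exp (-s) * countingFunction μ s :=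
    fun s => mul_nonneg (exp_pos _).le (countingFunction_nonneg μ s)
  have hmeas : Measurable fun s => exp (-s) * countingFunction μ s :=
    (by fun_prop : Measurable fun s : ℝ => exp (-s)).mul (countingFunction_mono hfin).measurable
  rw [integral_eq_lintegral_of_nonneg_ae (ae_of_all _ hnonneg) hmeas.aestronglyMeasurable]
  simp_rw [ENNReal.ofReal_mul (exp_pos _).le, ofReal_countingFunction (hfin _),
    ← tsum_ofReal_exp_neg_eq_lintegral hμ, ENNReal.tsum_toReal_eq fun _ => ENNReal.ofReal_ne_top,
    ENNReal.toReal_ofReal (exp_pos _).le]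

section Abelian

variable {N : ℝ → ℝ} {ν c : ℝ}

lemma integrableOn_exp_neg_mul_add_mul_rpow (hν : -1 < ν) (a b : ℝ) :
    IntegrableOn (fun s => exp (-s) * (a + b * s ^ ν)) (Ioi 0) := by
  have hexp : IntegrableOn (fun s => exp (-s)) (Ioi 0) := integrableOn_exp_neg_Ioi 0
  have hgamma : IntegrableOn (fun s => exp (-s) * s ^ ν) (Ioi 0) := by
    simpa using GammaIntegral_convergent (show 0 < ν + 1 by linarith)
  exact IntegrableOn.congr_fun ((hexp.const_mul a).add (hgamma.const_mul b))
    (fun s _ => by simp only [Pi.add_apply]; ring) measurableSet_Ioi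

lemma integral_exp_neg_mul_mul_rpow (hν : -1 < ν) (c : ℝ) :
    ∫ s in Ioi 0, exp (-s) * (c * s ^ ν) = c * Gamma (ν + 1) := by
  rw [Gamma_eq_integral (by linarith), add_sub_cancel_right, ← integral_const_mul]
  simp_rw [mul_left_comm c]

lemma tendsto_rpow_mul_comp_div (hN : Tendsto (fun x => N x / x ^ ν) atTop (𝓝 c)) {s : ℝ}
    (hs : 0 < s) : Tendsto (fun t => t ^ ν * N (s / t)) (𝓝[>] 0) (𝓝 (c * s ^ ν)) := by
  have hst : Tendsto (fun t => s / t) (𝓝[>] 0) atTop := by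
    simpa [div_eq_mul_inv] using tendsto_inv_nhdsGT_zero.const_mul_atTop hs
  refine ((hN.comp hst).mul_const (s ^ ν)).congr' ?_
  filter_upwards [self_mem_nhdsWithin] with t (ht : 0 < t)
  have : (s / t) ^ ν = s ^ ν / t ^ ν := div_rpow hs.le ht.le ν
  simp only [Function.comp_apply, this]
  field_simp

lemma exists_rpow_mul_comp_div_le (hmono : Monotone N) (hnonneg : ∀ x, 0 ≤ N x) (hν : 0 ≤ ν)
    (hN : Tendsto (fun x => N x / x ^ ν) atTop (𝓝 c)) :
    ∃ a b, ∀ t ∈ Ioc (0 : ℝ) 1, ∀ s, 0 < s → t ^ ν * N (s / t) ≤ a + b * s ^ ν := by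
  have hc : c < |c| + 1 := (le_abs_self c).trans_lt (lt_add_one _)
  obtain ⟨x₀, hx₀⟩ := eventually_atTop.1 <|
    (hN.eventually (eventually_le_nhds hc)).and (eventually_gt_atTop 0)
  refine ⟨N x₀, |c| + 1, fun t ⟨ht, ht1⟩ s hs => ?_⟩
  have hsν : 0 ≤ (|c| + 1) * s ^ ν := by positivity
  rcases le_or_gt x₀ (s / t) with hx | hx
  · obtain ⟨hle, hpos⟩ := hx₀ _ hx
    have : N (s / t) ≤ (|c| + 1) * s ^ ν / t ^ ν := by
      rwa [div_le_iff₀ (rpow_pos_of_pos hpos ν), div_rpow hs.le ht.le, ← mul_div_assoc] at hle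
    calc t ^ ν * N (s / t) ≤ (|c| + 1) * s ^ ν := by
          rwa [le_div_iff₀' (rpow_pos_of_pos ht ν)] at this
      _ ≤ N x₀ + (|c| + 1) * s ^ ν := le_add_of_nonneg_left (hnonneg x₀)
  · calc t ^ ν * N (s / t) ≤ 1 * N x₀ :=
          mul_le_mul (rpow_le_one ht.le ht1 hν) (hmono hx.le) (hnonneg _) zero_le_one
      _ ≤ N x₀ + (|c| + 1) * s ^ ν := by linarith

theorem tendsto_rpow_mul_integral_exp_neg_mul_comp_div (hmono : Monotone N)
    (hnonneg : ∀ x, 0 ≤ N x) (hν : 0 ≤ ν) (hN : Tendsto (fun x => N x / x ^ ν) atTop (𝓝 c)) :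
    Tendsto (fun t => t ^ ν * ∫ s in Ioi 0, exp (-s) * N (s / t)) (𝓝[>] 0)
      (𝓝 (c * Gamma (ν + 1))) := by
  obtain ⟨a, b, hbound⟩ := exists_rpow_mul_comp_div_le hmono hnonneg hν hN
  rw [← integral_exp_neg_mul_mul_rpow (by linarith) c]
  simp_rw [← integral_const_mul, mul_left_comm _ (exp _)]
  refine tendsto_integral_filter_of_dominated_convergence (fun s => exp (-s) * (a + b * s ^ ν))
    (Eventually.of_forall fun t => ?_) ?_
    (integrableOn_exp_neg_mul_add_mul_rpow (by linarith) a b) ?_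
  · exact ((by fun_prop : Measurable fun s : ℝ => exp (-s)).mul
      ((hmono.measurable.comp (measurable_id.div_const t)).const_mul _)).aestronglyMeasurable
  · filter_upwards [Ioc_mem_nhdsGT zero_lt_one] with t ht
    filter_upwards [ae_restrict_mem measurableSet_Ioi] with s (hs : 0 < s)
    rw [norm_of_nonneg (by have := hnonneg (s / t); have := ht.1; positivity)]
    exact mul_le_mul_of_nonneg_left (hbound t ht s hs) (exp_pos _).le
  · filter_upwards [ae_restrict_mem measurableSet_Ioi] with s (hs : 0 < s)
    exact (tendsto_rpow_mul_comp_div hN hs).const_mul _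

end Abelian

lemma tsum_exp_neg_mul_eq_integral {Λ : ℕ → ℝ} (hΛ : ∀ k, 0 ≤ Λ k)
    (hfin : ∀ x, {k | Λ k ≤ x}.Finite) {t : ℝ} (ht : 0 < t) :
    ∑' k, exp (-(Λ k * t)) = ∫ s in Ioi 0, exp (-s) * countingFunction Λ (s / t) := by
  have hfin_t : ∀ x, {k | Λ k * t ≤ x}.Finite := fun x => by
    simpa only [← le_div_iff₀ ht] using hfin (x / t)
  simp_rw [tsum_exp_neg_eq_integral_exp_neg_mul_countingFunction
    (fun k => mul_nonneg (hΛ k) ht.le) hfin_t, countingFunction_mul_const Λ ht]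

lemma tendsto_div_of_tendsto_div_const_mul_one {α : Type*} {l : Filter α} {f g : α → ℝ} {C : ℝ}
    (hC : C ≠ 0) (h : Tendsto (fun x => f x / (C * g x)) l (𝓝 1)) :
    Tendsto (fun x => f x / g x) l (𝓝 C) := by
  refine (mul_one C ▸ h.const_mul C).congr fun x => ?_
  rw [← mul_div_assoc, mul_div_mul_left _ _ hC]

theorem heat_trace_asymptotics_general
    (Λ : ℕ → ℝ) (hΛnonneg : ∀ k, 0 ≤ Λ k)
    (hΛtop : Tendsto Λ atTop atTop)
    (C n : ℝ) (hC : 0 < C) (hn : 0 < n)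
    (hWeyl : Tendsto
      (fun x : ℝ => (Nat.card {k : ℕ | Λ k ≤ x} : ℝ) / (C * x ^ (n / 2)))
      atTop (nhds 1)) :
    Tendsto
      (fun t : ℝ =>
        (∑' k : ℕ, Real.exp (-(Λ k * t))) /
          (C * Real.Gamma (n / 2 + 1) * t ^ (-(n / 2))))
      (nhdsWithin 0 (Ioi 0)) (nhds 1) := by
  have hfin := finite_setOf_le_of_tendsto_atTop hΛtop
  have hCΓ : 0 < C * Gamma (n / 2 + 1) := mul_pos hC (Gamma_pos_of_pos (by positivity))
  have hlim := tendsto_rpow_mul_integral_exp_neg_mul_comp_div (countingFunction_mono hfin)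
    (countingFunction_nonneg Λ) (by positivity)
    (tendsto_div_of_tendsto_div_const_mul_one hC.ne' hWeyl)
  rw [← div_self hCΓ.ne']
  refine (hlim.div_const _).congr' ?_
  filter_upwards [self_mem_nhdsWithin] with t (ht : 0 < t)
  rw [tsum_exp_neg_mul_eq_integral hΛnonneg hfin ht, rpow_neg ht.le]
  field_simp

/-- Heat trace asymptotics from Weyl's law: if the counting function satisfies
`N(λ) ∼ C λ^(n/2)` as `λ → ∞`, then `∑_k e^{-λ_k t} ∼ C Γ(n/2 + 1) t^(-n/2)` as `t → 0⁺`. -/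
theorem heat_trace_asymptotics
    (Λ : ℕ → ℝ) (hΛmono : Monotone Λ) (hΛnonneg : ∀ k, 0 ≤ Λ k)
    (hΛtop : Tendsto Λ atTop atTop)
    (C n : ℝ) (hC : 0 < C) (hn : 0 < n)
    (hWeyl : Tendsto
      (fun x : ℝ => (Nat.card {k : ℕ | Λ k ≤ x} : ℝ) / (C * x ^ (n / 2)))
      atTop (nhds 1)) :
    Tendsto
      (fun t : ℝ =>
        (∑' k : ℕ, Real.exp (-(Λ k * t))) /
          (C * Real.Gamma (n / 2 + 1) * t ^ (-(n / 2))))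
      (nhdsWithin 0 (Ioi 0)) (nhds 1) :=
  heat_trace_asymptotics_general Λ hΛnonneg hΛtop C n hC hn hWeyl
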